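/- Let X₁ ⊆ ℂ^n and X₂ ⊆ ℂ^m be open sets, and let φ₁ and φ₂ be weights on X₁ and X₂ respectively, each satisfying the evaluation bound. For i = 1,2 suppose K_i : X_i × X_i → ℂ is a function such that for every z ∈ X_i the function ζ ↦ K_i(ζ,z) belongs to A²(X_i,φ_i), and such that the reproducing property holds: f(z) = ∫_{X_i} f(ζ)·conj(K_i(ζ,z))·φ_i(ζ) dλ(ζ) for every f ∈ A²(X_i,φ_i) and every z ∈ X_i. Then for every (z,w) ∈ X₁×X₂ the function (ζ,u) ↦ K₁(ζ,z)·K₂(u,w) belongs to A²(X₁×X₂, φ₁φ₂), and for every f ∈ A²(X₁×X₂, φ₁φ₂) one has f(z,w) = ∫_{X₁×X₂} f(ζ,u)·conj(K₁(ζ,z)·K₂(u,w))·φ₁(ζ)φ₂(u) dλ(ζ,u). In other words, the weighted Bergman kernel of X₁×X₂ with weight φ₁φ₂ decomposes as the product of the weighted Bergman kernels: B_{X₁×X₂, φ₁φ₂}((ζ,u),(conj z, conj w)) = B_{X₁,φ₁}(ζ, conj z)·B_{X₂,φ₂}(u, conj w). -/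

import Mathlib

open MeasureTheory

noncomputable section

/-- `f` belongs to the weighted Bergman space `A²(X, μ)`: it is holomorphic on `X` and
`|f|² μ` is integrable on `X`. -/
def MemA2 {E : Type*} [NormedAddCommGroup E] [NormedSpace ℂ E] [MeasureSpace E]
    (X : Set E) (μ : E → ℝ) (f : E → ℂ) : Prop :=
  DifferentiableOn ℂ f X ∧ IntegrableOn (fun x => ‖f x‖ ^ 2 * μ x) X volume

/-- The squared norm `‖f‖²_{X,μ} = ∫_X |f|² μ dλ`. -/
def normSqA2 {E : Type*} [NormedAddCommGroup E] [NormedSpace ℂ E] [MeasureSpace E]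
    (X : Set E) (μ : E → ℝ) (f : E → ℂ) : ℝ :=
  ∫ x in X, ‖f x‖ ^ 2 * μ x

/-- The inner product `⟨f,g⟩_{X,μ} = ∫_X f ·conj(g)· μ dλ`. -/
def innerA2 {E : Type*} [NormedAddCommGroup E] [NormedSpace ℂ E] [MeasureSpace E]
    (X : Set E) (μ : E → ℝ) (f g : E → ℂ) : ℂ :=
  ∫ x in X, f x * (starRingEnd ℂ) (g x) * (μ x : ℂ)

/-- `μ` is a weight on `X`: measurable and positive a.e. on `X`. -/
def IsWeight {E : Type*} [NormedAddCommGroup E] [NormedSpace ℂ E] [MeasureSpace E]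
    (X : Set E) (μ : E → ℝ) : Prop :=
  Measurable μ ∧ ∀ᵐ x ∂(volume.restrict X), 0 < μ x

/-- The weight `μ` on `X` satisfies the evaluation bound. -/
def EvalBound {E : Type*} [NormedAddCommGroup E] [NormedSpace ℂ E] [MeasureSpace E]
    (X : Set E) (μ : E → ℝ) : Prop :=
  ∀ K : Set E, K ⊆ X → IsCompact K → ∃ C : ℝ, ∀ f : E → ℂ, MemA2 X μ f →
    ∀ z ∈ K, ‖f z‖ ^ 2 ≤ C * normSqA2 X μ f

/-- The product weight `(φ₁φ₂)(z₁,z₂) = φ₁(z₁)·φ₂(z₂)`. -/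
def prodWeight {F G : Type*} (φ₁ : F → ℝ) (φ₂ : G → ℝ) : F × G → ℝ :=
  fun p => φ₁ p.1 * φ₂ p.2

/-!
Reproduce `f (z, w)` first in the first variable, then in the second. The slice
`ζ ↦ f (ζ, w)` lies in `A²(X₁, φ₁)` because the evaluation bound on `X₂` gives
`|f (ζ, w)|² ≤ C ‖f (ζ, ·)‖²_{X₂,φ₂}`, whose `φ₁`-weighted integral over `X₁` is `C ‖f‖²` by
Tonelli. Almost every slice `u ↦ f (ζ, u)` lies in `A²(X₂, φ₂)`, so reproducing it by `K₂`
turns the result into an iterated integral, and Fubini applies since `f · conj K · φ` is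
dominated by `(|f|² + |K|²) φ / 2`.
-/

section

variable {E F : Type*} [MeasureSpace E] [MeasureSpace F]

theorem volume_restrict_prod [SFinite (volume : Measure E)] [SFinite (volume : Measure F)]
    (s : Set E) (t : Set F) :
    (volume : Measure (E × F)).restrict (s ×ˢ t) = (volume.restrict s).prod (volume.restrict t) :=
  (Measure.prod_restrict s t).symm

variable [NormedAddCommGroup E] [NormedSpace ℂ E] [NormedAddCommGroup F] [NormedSpace ℂ F]

theorem MemA2.integrableOn_mul_conj [OpensMeasurableSpace E] {X : Set E} {μ : E → ℝ}
    {f g : E → ℂ} (hX : MeasurableSet X) (hμ : IsWeight X μ) (hf : MemA2 X μ f)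
    (hg : MemA2 X μ g) :
    IntegrableOn (fun x => f x * (starRingEnd ℂ) (g x) * (μ x : ℂ)) X := by
  have hmeas : AEStronglyMeasurable (fun x => f x * (starRingEnd ℂ) (g x) * (μ x : ℂ))
      (volume.restrict X) :=
    ((hf.1.continuousOn.aestronglyMeasurable hX).mul
      ((continuous_star.comp_continuousOn hg.1.continuousOn).aestronglyMeasurable hX)).mul
      (Complex.measurable_ofReal.comp hμ.1).aestronglyMeasurable
  refine Integrable.mono' ((hf.2.add hg.2).div_const 2) hmeas ?_
  filter_upwards [hμ.2] with x hx
  rw [norm_mul, norm_mul, RCLike.norm_conj, Complex.norm_real, Real.norm_of_nonneg hx.le]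
  have := mul_le_mul_of_nonneg_right (two_mul_le_add_sq ‖f x‖ ‖g x‖) hx.le
  simp only [Pi.add_apply]
  linarith

variable [SFinite (volume : Measure E)] [SFinite (volume : Measure F)]
  {X₁ : Set E} {X₂ : Set F} {φ₁ : E → ℝ} {φ₂ : F → ℝ}

theorem IsWeight.prod (h₁ : IsWeight X₁ φ₁) (h₂ : IsWeight X₂ φ₂) :
    IsWeight (X₁ ×ˢ X₂) (prodWeight φ₁ φ₂) := by
  refine ⟨(h₁.1.comp measurable_fst).mul (h₂.1.comp measurable_snd), ?_⟩
  rw [volume_restrict_prod]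
  filter_upwards [Measure.quasiMeasurePreserving_fst.ae h₁.2,
    Measure.quasiMeasurePreserving_snd.ae h₂.2] with p hp₁ hp₂
  exact mul_pos hp₁ hp₂

theorem MemA2.mul_prod {g : E → ℂ} {h : F → ℂ} (hg : MemA2 X₁ φ₁ g) (hh : MemA2 X₂ φ₂ h) :
    MemA2 (X₁ ×ˢ X₂) (prodWeight φ₁ φ₂) (fun p => g p.1 * h p.2) := by
  refine ⟨(hg.1.comp differentiableOn_fst fun p hp => hp.1).mul
    (hh.1.comp differentiableOn_snd fun p hp => hp.2), ?_⟩
  rw [IntegrableOn, volume_restrict_prod]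
  refine (hg.2.mul_prod hh.2).congr (Filter.Eventually.of_forall fun p => ?_)
  simp only [prodWeight, norm_mul, mul_pow]
  ring

theorem MemA2.prod_right_ae {f : E × F → ℂ} (hX₁ : MeasurableSet X₁) (hw₁ : IsWeight X₁ φ₁)
    (hf : MemA2 (X₁ ×ˢ X₂) (prodWeight φ₁ φ₂) f) :
    ∀ᵐ ζ ∂(volume.restrict X₁), MemA2 X₂ φ₂ (fun u => f (ζ, u)) := by
  have hint := hf.2
  rw [IntegrableOn, volume_restrict_prod] at hint
  filter_upwards [hint.prod_right_ae, ae_restrict_mem hX₁, hw₁.2] with ζ hζ hζX hζpos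
  refine ⟨hf.1.comp (differentiableOn_const ζ |>.prodMk differentiableOn_id)
    fun u hu => Set.mk_mem_prod hζX hu, ?_⟩
  refine (hζ.const_mul (φ₁ ζ)⁻¹).congr (Filter.Eventually.of_forall fun u => ?_)
  simp only [prodWeight]
  field_simp

theorem EvalBound.memA2_prod_left [OpensMeasurableSpace E] {f : E × F → ℂ} {w : F}
    (he₂ : EvalBound X₂ φ₂) (hX₁ : MeasurableSet X₁) (hw₁ : IsWeight X₁ φ₁)
    (hf : MemA2 (X₁ ×ˢ X₂) (prodWeight φ₁ φ₂) f) (hw : w ∈ X₂) :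
    MemA2 X₁ φ₁ (fun ζ => f (ζ, w)) := by
  have hdiff : DifferentiableOn ℂ (fun ζ => f (ζ, w)) X₁ :=
    hf.1.comp (differentiableOn_id.prodMk (differentiableOn_const w))
      fun ζ hζ => Set.mk_mem_prod hζ hw
  obtain ⟨C, hC⟩ := he₂ {w} (Set.singleton_subset_iff.2 hw) isCompact_singleton
  have hint := hf.2
  rw [IntegrableOn, volume_restrict_prod] at hint
  refine ⟨hdiff, Integrable.mono' (hint.integral_prod_left.const_mul C)
    ((hdiff.continuousOn.norm.pow 2).aestronglyMeasurable hX₁ |>.mul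
      hw₁.1.aestronglyMeasurable) ?_⟩
  filter_upwards [hf.prod_right_ae hX₁ hw₁, hw₁.2] with ζ hζ hζpos
  have hslice : ∫ u in X₂, ‖f (ζ, u)‖ ^ 2 * prodWeight φ₁ φ₂ (ζ, u)
      = φ₁ ζ * normSqA2 X₂ φ₂ (fun u => f (ζ, u)) := by
    rw [normSqA2, ← integral_const_mul]
    simp only [prodWeight]
    congr 1 with u
    ring
  rw [Real.norm_of_nonneg (by positivity), hslice]
  nlinarith [mul_le_mul_of_nonneg_left (hC _ hζ w rfl) hζpos.le]

end

theorem bergman_kernel_product_decomposition_general {n m : ℕ}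
    (X₁ : Set (Fin n → ℂ)) (X₂ : Set (Fin m → ℂ))
    (hX₁ : IsOpen X₁) (hX₂ : IsOpen X₂)
    (φ₁ : (Fin n → ℂ) → ℝ) (φ₂ : (Fin m → ℂ) → ℝ)
    (hw₁ : IsWeight X₁ φ₁) (hw₂ : IsWeight X₂ φ₂)
    (he₂ : EvalBound X₂ φ₂)
    (K₁ : (Fin n → ℂ) → (Fin n → ℂ) → ℂ) (K₂ : (Fin m → ℂ) → (Fin m → ℂ) → ℂ)
    (hK₁mem : ∀ z ∈ X₁, MemA2 X₁ φ₁ (fun ζ => K₁ ζ z))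
    (hK₂mem : ∀ w ∈ X₂, MemA2 X₂ φ₂ (fun u => K₂ u w))
    (hK₁rep : ∀ f : (Fin n → ℂ) → ℂ, MemA2 X₁ φ₁ f → ∀ z ∈ X₁,
      f z = ∫ ζ in X₁, f ζ * (starRingEnd ℂ) (K₁ ζ z) * (φ₁ ζ : ℂ))
    (hK₂rep : ∀ g : (Fin m → ℂ) → ℂ, MemA2 X₂ φ₂ g → ∀ w ∈ X₂,
      g w = ∫ u in X₂, g u * (starRingEnd ℂ) (K₂ u w) * (φ₂ u : ℂ)) :
    ∀ z ∈ X₁, ∀ w ∈ X₂,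
      MemA2 (X₁ ×ˢ X₂) (prodWeight φ₁ φ₂) (fun p => K₁ p.1 z * K₂ p.2 w) ∧
      ∀ f : (Fin n → ℂ) × (Fin m → ℂ) → ℂ, MemA2 (X₁ ×ˢ X₂) (prodWeight φ₁ φ₂) f →
        f (z, w) = ∫ p in X₁ ×ˢ X₂,
          f p * (starRingEnd ℂ) (K₁ p.1 z * K₂ p.2 w) * ((φ₁ p.1 * φ₂ p.2 : ℝ) : ℂ) := by
  intro z hz w hw
  have hK := (hK₁mem z hz).mul_prod (hK₂mem w hw)
  refine ⟨hK, fun f hf => ?_⟩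
  have hint := hf.integrableOn_mul_conj (hX₁.prod hX₂).measurableSet (hw₁.prod hw₂) hK
  calc f (z, w) = ∫ ζ in X₁, f (ζ, w) * (starRingEnd ℂ) (K₁ ζ z) * (φ₁ ζ : ℂ) :=
        hK₁rep _ (he₂.memA2_prod_left hX₁.measurableSet hw₁ hf hw) z hz
    _ = ∫ ζ in X₁, ∫ u in X₂,
          f (ζ, u) * (starRingEnd ℂ) (K₁ ζ z * K₂ u w) * ((φ₁ ζ * φ₂ u : ℝ) : ℂ) := by
        refine integral_congr_ae ?_
        filter_upwards [hf.prod_right_ae hX₁.measurableSet hw₁] with ζ hζ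
        rw [hK₂rep _ hζ w hw, ← integral_mul_const, ← integral_mul_const]
        congr 1 with u
        simp only [map_mul]
        push_cast
        ring
    _ = _ := (setIntegral_prod _ hint).symm

/-- if `K₁`, `K₂` are reproducing (Bergman) kernels of `A²(X₁,φ₁)` and
`A²(X₂,φ₂)`, then `(ζ,u) ↦ K₁(ζ,z)·K₂(u,w)` is the reproducing (Bergman) kernel of
`A²(X₁×X₂, φ₁φ₂)`. -/
theorem bergman_kernel_product_decomposition {n m : ℕ}
    (X₁ : Set (Fin n → ℂ)) (X₂ : Set (Fin m → ℂ))
    (hX₁ : IsOpen X₁) (hX₂ : IsOpen X₂)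
    (φ₁ : (Fin n → ℂ) → ℝ) (φ₂ : (Fin m → ℂ) → ℝ)
    (hw₁ : IsWeight X₁ φ₁) (hw₂ : IsWeight X₂ φ₂)
    (he₁ : EvalBound X₁ φ₁) (he₂ : EvalBound X₂ φ₂)
    (K₁ : (Fin n → ℂ) → (Fin n → ℂ) → ℂ) (K₂ : (Fin m → ℂ) → (Fin m → ℂ) → ℂ)
    (hK₁mem : ∀ z ∈ X₁, MemA2 X₁ φ₁ (fun ζ => K₁ ζ z))
    (hK₂mem : ∀ w ∈ X₂, MemA2 X₂ φ₂ (fun u => K₂ u w))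
    (hK₁rep : ∀ f : (Fin n → ℂ) → ℂ, MemA2 X₁ φ₁ f → ∀ z ∈ X₁,
      f z = ∫ ζ in X₁, f ζ * (starRingEnd ℂ) (K₁ ζ z) * (φ₁ ζ : ℂ))
    (hK₂rep : ∀ g : (Fin m → ℂ) → ℂ, MemA2 X₂ φ₂ g → ∀ w ∈ X₂,
      g w = ∫ u in X₂, g u * (starRingEnd ℂ) (K₂ u w) * (φ₂ u : ℂ)) :
    ∀ z ∈ X₁, ∀ w ∈ X₂,
      MemA2 (X₁ ×ˢ X₂) (prodWeight φ₁ φ₂) (fun p => K₁ p.1 z * K₂ p.2 w) ∧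
      ∀ f : (Fin n → ℂ) × (Fin m → ℂ) → ℂ, MemA2 (X₁ ×ˢ X₂) (prodWeight φ₁ φ₂) f →
        f (z, w) = ∫ p in X₁ ×ˢ X₂,
          f p * (starRingEnd ℂ) (K₁ p.1 z * K₂ p.2 w) * ((φ₁ p.1 * φ₂ p.2 : ℝ) : ℂ) :=
  bergman_kernel_product_decomposition_general X₁ X₂ hX₁ hX₂ φ₁ φ₂ hw₁ hw₂ he₂ K₁ K₂ hK₁mem hK₂mem
    hK₁rep hK₂rep
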